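/- arXiv:2403.18815 — 13 statements merged into one kernel-verified Lean document; each statement's English description precedes it below -/
import Mathlib

section
/- The endomorphism phi restricts to a bijection of the set AV of algebraic elements of V onto itself: phi maps AV into AV, for every algebraic v there is an algebraic w with phi(w) = v, and if v is algebraic with phi(v) = 0 then v = 0. -/
open Polynomial

/-- An element `v` of `V` is *algebraic* with respect to the endomorphism `phi` if
`P(phi)(v) = 0` for some polynomial `P` whose constant term equals `1`. -/
def IsAlgElem {K V : Type*} [Field K] [AddCommGroup V] [Module K V]
    (phi : Module.End K V) (v : V) : Prop :=
  ∃ P : K[X], P.coeff 0 = 1 ∧ Polynomial.aeval phi P v = 0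

lemma aeval_comm_apply {K V : Type*} [Field K] [AddCommGroup V] [Module K V]
    (phi : Module.End K V) (P : K[X]) (v : V) :
    Polynomial.aeval phi P (phi v) = phi (Polynomial.aeval phi P v) := by
  have h : Polynomial.aeval phi P * phi = phi * Polynomial.aeval phi P := by
    have h1 := map_mul (Polynomial.aeval phi) P X
    have h2 := map_mul (Polynomial.aeval phi) X P
    rw [aeval_X] at h1 h2
    rw [← h1, ← h2, mul_comm]
  calc Polynomial.aeval phi P (phi v) = (Polynomial.aeval phi P * phi) v := rfl
    _ = (phi * Polynomial.aeval phi P) v := by rw [h]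
    _ = phi (Polynomial.aeval phi P v) := rfl

lemma aeval_decomp {K V : Type*} [Field K] [AddCommGroup V] [Module K V]
    (phi : Module.End K V) (P : K[X]) (h0 : P.coeff 0 = 1) (v : V) :
    Polynomial.aeval phi P v = phi (Polynomial.aeval phi P.divX v) + v := by
  conv_lhs => rw [← X_mul_divX_add P]
  rw [map_add, map_mul, aeval_X, aeval_C, h0]
  simp [Module.End.mul_apply, Algebra.algebraMap_eq_smul_one]

/-- `phi` restricts to a bijection of the set of algebraic elements onto itself: it maps
algebraic elements to algebraic elements, every algebraic element has an algebraic preimage,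
and it is injective on algebraic elements (an algebraic `v` with `phi v = 0` is `0`). -/
theorem algElem_restrict_bijective {K V : Type*} [Field K] [AddCommGroup V] [Module K V]
    (phi : Module.End K V) :
    (∀ v : V, IsAlgElem phi v → IsAlgElem phi (phi v)) ∧
      (∀ v : V, IsAlgElem phi v → ∃ w : V, IsAlgElem phi w ∧ phi w = v) ∧
      (∀ v : V, IsAlgElem phi v → phi v = 0 → v = 0) := by
  refine ⟨?_, ?_, ?_⟩
  · rintro v ⟨P, h0, hP⟩
    exact ⟨P, h0, by rw [aeval_comm_apply, hP, map_zero]⟩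
  · rintro v ⟨P, h0, hP⟩
    refine ⟨-(Polynomial.aeval phi P.divX v), ⟨P, h0, ?_⟩, ?_⟩
    · rw [map_neg, neg_eq_zero]
      have := aeval_comm_apply phi P.divX v  -- not needed
      calc Polynomial.aeval phi P (Polynomial.aeval phi P.divX v)
          = (Polynomial.aeval phi P * Polynomial.aeval phi P.divX) v := rfl
        _ = (Polynomial.aeval phi P.divX * Polynomial.aeval phi P) v := by
              rw [← map_mul, ← map_mul, mul_comm]
        _ = Polynomial.aeval phi P.divX (Polynomial.aeval phi P v) := rfl
        _ = 0 := by rw [hP, map_zero]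
    · have h := aeval_decomp phi P h0 v
      rw [hP] at h
      rw [map_neg]
      exact neg_eq_of_add_eq_zero_right h.symm
  · rintro v ⟨P, h0, hP⟩ hv
    have h := aeval_decomp phi P h0 v
    rw [hP, ← aeval_comm_apply, hv, map_zero, zero_add] at h
    exact h.symm
end

section
/- If V has finite dimension d, then the set AV of algebraic elements of V equals the image of phi^d. -/
open Polynomial

/-- If `V` has finite dimension `d`, then the set of algebraic elements of `V` equals the
image of `phi^d`. -/
theorem algElem_eq_range_pow {K V : Type*} [Field K] [AddCommGroup V] [Module K V]
    [FiniteDimensional K V] (phi : Module.End K V) (d : ℕ)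
    (hd : Module.finrank K V = d) :
    {v : V | IsAlgElem phi v} = Set.range (phi ^ d) := by
  ext v
  simp only [Set.mem_setOf_eq, Set.mem_range]
  constructor
  · rintro ⟨P, hP0, hPv⟩
    set N : Module.End K V := -(Polynomial.aeval phi P.divX) with hN
    have hv : (phi * N) v = v := by
      have hXP : Polynomial.aeval phi (X * P.divX + C (P.coeff 0)) v = 0 := by
        rw [Polynomial.X_mul_divX_add]; exact hPv
      simp only [map_add, map_mul, Polynomial.aeval_X, Polynomial.aeval_C, hP0, map_one,
        Module.End.mul_apply, LinearMap.add_apply, Module.End.one_apply] at hXP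
      have h2 : phi ((Polynomial.aeval phi P.divX) v) = -v :=
        eq_neg_of_add_eq_zero_left hXP
      simp [hN, Module.End.mul_apply, map_neg, h2]
    have hcomm : Commute phi N := by
      have h3 : Commute (Polynomial.aeval phi X) (Polynomial.aeval phi P.divX) :=
        (Commute.all X P.divX).map (Polynomial.aeval phi)
      rw [Polynomial.aeval_X] at h3
      exact (h3.neg_right)
    have key : ∀ k : ℕ, ((phi * N) ^ k) v = v := by
      intro k
      induction k with
      | zero => simp
      | succ k ih => rw [pow_succ', Module.End.mul_apply, ih, hv]
    refine ⟨(N ^ d) v, ?_⟩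
    have := key d
    rwa [hcomm.mul_pow, Module.End.mul_apply] at this
  · rintro ⟨w, rfl⟩
    set p : K[X] := LinearMap.charpoly phi with hp
    have hpmonic : p.Monic := LinearMap.charpoly_monic phi
    have hpne : p ≠ 0 := hpmonic.ne_zero
    set j : ℕ := p.rootMultiplicity 0 with hj
    set S : K[X] := p /ₘ (X - C 0) ^ j with hS
    have hfact : (X - C 0) ^ j * S = p := Polynomial.pow_mul_divByMonic_rootMultiplicity_eq p 0
    have hS0 : S.eval 0 ≠ 0 := Polynomial.eval_divByMonic_pow_rootMultiplicity_ne_zero 0 hpne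
    have hSc : S.coeff 0 ≠ 0 := by rwa [Polynomial.coeff_zero_eq_eval_zero]
    have hjd : j ≤ d := by
      have hdvd : (X - C (0 : K)) ^ j ∣ p := Polynomial.pow_rootMultiplicity_dvd p 0
      have := Polynomial.natDegree_le_of_dvd hdvd hpne
      simp only [map_zero, sub_zero, Polynomial.natDegree_X_pow] at this
      rwa [LinearMap.charpoly_natDegree, hd] at this
    refine ⟨C (S.coeff 0)⁻¹ * S, ?_, ?_⟩
    · simp [Polynomial.coeff_C_mul, inv_mul_cancel₀ hSc]
    · have hkey : (C (S.coeff 0)⁻¹ * S) * X ^ d = (C (S.coeff 0)⁻¹ * X ^ (d - j)) * p := by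
        have hX : X ^ (d - j) * X ^ j = X ^ d := pow_sub_mul_pow (X : K[X]) hjd
        rw [← hfact]
        simp only [map_zero, sub_zero]
        rw [← hX]
        ring
      have h0 : Polynomial.aeval phi ((C (S.coeff 0)⁻¹ * S) * X ^ d) = 0 := by
        rw [hkey, map_mul, LinearMap.aeval_self_charpoly, mul_zero]
      calc (Polynomial.aeval phi (C (S.coeff 0)⁻¹ * S)) ((phi ^ d) w)
          = (Polynomial.aeval phi ((C (S.coeff 0)⁻¹ * S) * X ^ d)) w := by
            simp [map_mul, map_pow, Module.End.mul_apply]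
        _ = 0 := by rw [h0]; rfl
end

section
/- If every element of V is eventually algebraic, then V admits the canonical decomposition V = gker(phi) ⊕ AV; that is, the generalized kernel of phi and the subspace AV of algebraic elements intersect only in 0 and together span V. -/
open Polynomial

/-- If every element of `V` is eventually algebraic, then `V` admits the canonical
decomposition `V = gker(phi) ⊕ AV`: the generalized kernel of `phi` and the set of algebraic
elements intersect only in `0`, and every element of `V` is the sum of an element of the
generalized kernel and an algebraic element. -/
theorem canonical_decomposition {K V : Type*} [Field K] [AddCommGroup V] [Module K V]
    (phi : Module.End K V) (h : ∀ v : V, ∃ k : ℕ, IsAlgElem phi ((phi ^ k) v)) :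
    (∀ v : V, (∃ k : ℕ, (phi ^ k) v = 0) → IsAlgElem phi v → v = 0) ∧
      (∀ v : V, ∃ n a : V, (∃ k : ℕ, (phi ^ k) n = 0) ∧ IsAlgElem phi a ∧ v = n + a) := by
  have key : ∀ (P : K[X]), P.coeff 0 = 1 → ∀ k : ℕ,
      ∃ A B : K[X], A * X ^ k + B * P = 1 := by
    intro P hP k
    have hX : ¬ (X : K[X]) ∣ P := by
      rw [Polynomial.X_dvd_iff, hP]; exact one_ne_zero
    have hcop : IsCoprime ((X : K[X]) ^ k) P :=
      ((Polynomial.irreducible_X.coprime_iff_not_dvd).mpr hX).pow_left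
    exact hcop
  constructor
  · rintro v ⟨k, hk⟩ ⟨P, hP0, hPv⟩
    obtain ⟨A, B, hAB⟩ := key P hP0 k
    have := congrArg (fun Q : K[X] => Polynomial.aeval phi Q v) hAB
    simp only [map_add, map_mul, map_pow, Polynomial.aeval_X, map_one,
      LinearMap.add_apply, Module.End.mul_apply, Module.End.one_apply] at this
    rw [hk, hPv, map_zero, map_zero, add_zero] at this
    exact this.symm
  · intro v
    obtain ⟨k, P, hP0, hPv⟩ := h v
    obtain ⟨A, B, hAB⟩ := key P hP0 k
    refine ⟨Polynomial.aeval phi B (Polynomial.aeval phi P v),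
      Polynomial.aeval phi A ((phi ^ k) v), ⟨k, ?_⟩, ⟨P, hP0, ?_⟩, ?_⟩
    · have : (phi ^ k) (Polynomial.aeval phi B (Polynomial.aeval phi P v))
          = Polynomial.aeval phi B (Polynomial.aeval phi P ((phi ^ k) v)) := by
        have h1 : (phi ^ k) * Polynomial.aeval phi B * Polynomial.aeval phi P
            = Polynomial.aeval phi B * Polynomial.aeval phi P * (phi ^ k) := by
          have hX : phi ^ k = Polynomial.aeval phi ((X : K[X]) ^ k) := by
            rw [map_pow, Polynomial.aeval_X]
          rw [hX, ← map_mul, ← map_mul, ← map_mul, ← map_mul]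
          congr 1; ring
        calc (phi ^ k) (Polynomial.aeval phi B (Polynomial.aeval phi P v))
            = ((phi ^ k) * Polynomial.aeval phi B * Polynomial.aeval phi P) v := rfl
          _ = (Polynomial.aeval phi B * Polynomial.aeval phi P * (phi ^ k)) v := by rw [h1]
          _ = Polynomial.aeval phi B (Polynomial.aeval phi P ((phi ^ k) v)) := rfl
      rw [this, hPv, map_zero]
    · have : Polynomial.aeval phi P (Polynomial.aeval phi A ((phi ^ k) v))
          = Polynomial.aeval phi A (Polynomial.aeval phi P ((phi ^ k) v)) := by
        have hc : Commute (Polynomial.aeval phi P) (Polynomial.aeval phi A) := by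
          rw [Commute, SemiconjBy, ← map_mul, ← map_mul, mul_comm]
        calc Polynomial.aeval phi P (Polynomial.aeval phi A ((phi ^ k) v))
            = ((Polynomial.aeval phi P) * (Polynomial.aeval phi A)) ((phi ^ k) v) := rfl
          _ = ((Polynomial.aeval phi A) * (Polynomial.aeval phi P)) ((phi ^ k) v) := by
              rw [hc.eq]
          _ = Polynomial.aeval phi A (Polynomial.aeval phi P ((phi ^ k) v)) := rfl
      rw [this, hPv, map_zero]
    · have := congrArg (fun Q : K[X] => Polynomial.aeval phi Q v) hAB
      simp only [map_add, map_mul, map_pow, Polynomial.aeval_X, map_one,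
        LinearMap.add_apply, Module.End.mul_apply, Module.End.one_apply] at this
      rw [eq_comm, add_comm]
      exact this
end

section
/- The canonical projection is well defined: if v in V, and w, w' are algebraic elements of V such that phi^k(w) = phi^k(v) and phi^l(w') = phi^l(v) for some integers k, l >= 0, then w = w'. -/
open Polynomial

lemma alg_and_pow_zero {K V : Type*} [Field K] [AddCommGroup V] [Module K V]
    (phi : Module.End K V) (u : V) (h : IsAlgElem phi u)
    (m : ℕ) (hm : (phi ^ m) u = 0) : u = 0 := by
  obtain ⟨P, hP0, hPu⟩ := h
  set Q := P.divX with hQ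
  have hP : P = X * Q + C 1 := by
    rw [hQ, ← hP0]; exact (X_mul_divX_add P).symm
  set A := Polynomial.aeval phi (X * Q) with hA
  have hu : (-A) u = u := by
    have h1 : A u + u = 0 := by
      rw [hP, map_add, LinearMap.add_apply, C_1, map_one, Module.End.one_apply] at hPu
      exact hPu
    have : A u = -u := by linear_combination (norm := module) h1
    simp [this]
  have hpow : ∀ n : ℕ, ((-A) ^ n) u = u := by
    intro n
    induction n with
    | zero => simp
    | succ n ih =>
      rw [pow_succ, Module.End.mul_apply, hu, ih]
  have hAm : (A ^ m) u = 0 := by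
    have : A ^ m = Polynomial.aeval phi ((X * Q) ^ m) := by rw [map_pow]
    rw [this, mul_pow, mul_comm, map_mul, Module.End.mul_apply]
    simp [aeval_X_pow, hm]
  have := hpow m
  rw [neg_pow, Module.End.mul_apply] at this
  rw [hAm] at this
  simpa using this.symm

/-- The canonical projection is well defined: if `w`, `w'` are algebraic and
`phi^k w = phi^k v`, `phi^l w' = phi^l v` for some `k, l ≥ 0`, then `w = w'`. -/
theorem canonical_projection_well_defined {K V : Type*} [Field K] [AddCommGroup V]
    [Module K V] (phi : Module.End K V) (v w w' : V)
    (hw : IsAlgElem phi w) (hw' : IsAlgElem phi w')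
    (k l : ℕ) (hk : (phi ^ k) w = (phi ^ k) v) (hl : (phi ^ l) w' = (phi ^ l) v) :
    w = w' := by
  obtain ⟨P, hP0, hPw⟩ := hw
  obtain ⟨P', hP'0, hP'w'⟩ := hw'
  set m := max k l with hmdef
  have hmu : (phi ^ m) (w - w') = 0 := by
    have h1 : (phi ^ m) w = (phi ^ m) v := by
      have : phi ^ m = phi ^ (m - k) * phi ^ k := by
        rw [← pow_add, Nat.sub_add_cancel (le_max_left k l)]
      rw [this, Module.End.mul_apply, Module.End.mul_apply, hk]
    have h2 : (phi ^ m) w' = (phi ^ m) v := by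
      have : phi ^ m = phi ^ (m - l) * phi ^ l := by
        rw [← pow_add, Nat.sub_add_cancel (le_max_right k l)]
      rw [this, Module.End.mul_apply, Module.End.mul_apply, hl]
    rw [map_sub, h1, h2, sub_self]
  have halg : IsAlgElem phi (w - w') := by
    refine ⟨P * P', by simp [mul_coeff_zero, hP0, hP'0], ?_⟩
    rw [map_mul, Module.End.mul_apply, map_sub, hP'w', sub_zero]
    rw [show Polynomial.aeval phi P (Polynomial.aeval phi P' w)
        = Polynomial.aeval phi P' (Polynomial.aeval phi P w) by
      rw [← Module.End.mul_apply, ← Module.End.mul_apply, ← map_mul, ← map_mul, mul_comm]]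
    rw [hPw, map_zero]
  have := alg_and_pow_zero phi (w - w') halg m hmu
  exact sub_eq_zero.mp this
end

section
/- If (rho, sigma) is a shift equivalence between (V, phi) and (V', phi'), then rho carries the set AV of algebraic elements of V bijectively onto the set AV' of algebraic elements of V': rho(AV) ⊆ AV', rho restricted to AV is injective, and every element of AV' is the image under rho of an element of AV. -/
open Polynomial

section Aux

variable {K V V' : Type*} [Field K] [AddCommGroup V] [Module K V]
  [AddCommGroup V'] [Module K V']

lemma aeval_mul_apply' (phi : Module.End K V) (A B : K[X]) (v : V) :
    aeval phi (A * B) v = aeval phi A (aeval phi B v) := by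
  rw [map_mul, Module.End.mul_apply]

lemma equiv_pow' (phi : Module.End K V) (phi' : Module.End K V')
    (rho : V →ₗ[K] V') (hrho : ∀ v, rho (phi v) = phi' (rho v)) (n : ℕ) :
    ∀ v : V, rho ((phi ^ n) v) = (phi' ^ n) (rho v) := by
  induction n with
  | zero => intro v; simp
  | succ n ih =>
      intro v
      rw [pow_succ, Module.End.mul_apply, ih, hrho, ← Module.End.mul_apply, ← pow_succ]

lemma aeval_X_pow' (phi : Module.End K V) (m : ℕ) :
    aeval phi ((X : K[X]) ^ m) = phi ^ m := by rw [map_pow, aeval_X]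

lemma pow_aeval_comm' (phi : Module.End K V) (m : ℕ) (A : K[X]) (x : V) :
    (phi ^ m) (aeval phi A x) = aeval phi A ((phi ^ m) x) := by
  rw [← aeval_X_pow' phi m, ← aeval_mul_apply', ← aeval_mul_apply', mul_comm]

lemma equiv_aeval' (phi : Module.End K V) (phi' : Module.End K V')
    (rho : V →ₗ[K] V') (hrho : ∀ v, rho (phi v) = phi' (rho v)) (P : K[X]) (v : V) :
    rho (aeval phi P v) = aeval phi' P (rho v) := by
  induction P using Polynomial.induction_on' with
  | add p q hp hq => simp [map_add, LinearMap.add_apply, hp, hq]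
  | monomial n a =>
      simp only [aeval_monomial, Module.End.mul_apply, Module.algebraMap_end_apply,
        map_smul]
      rw [equiv_pow' phi phi' rho hrho]

/-- If `P(φ)(v) = 0` and `P(0) = 1`, then `v = φ^m (Q(φ) v)` with `Q = (-P.divX)^m`. -/
lemma fix_pow' (phi : Module.End K V) (m : ℕ) (P : K[X]) (v : V)
    (h0 : P.coeff 0 = 1) (hv : aeval phi P v = 0) :
    (phi ^ m) (aeval phi ((-P.divX) ^ m) v) = v := by
  have key : aeval phi (X * (-P.divX)) v = v := by
    have h2 : aeval phi (X * P.divX + C (P.coeff 0)) v = 0 := by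
      rw [X_mul_divX_add]; exact hv
    rw [h0, map_add, aeval_C, map_one, LinearMap.add_apply, Module.End.one_apply] at h2
    have h3 : aeval phi (X * P.divX) v = -v := eq_neg_of_add_eq_zero_left h2
    rw [show (X : K[X]) * (-P.divX) = -(X * P.divX) by ring, map_neg,
      LinearMap.neg_apply, h3, neg_neg]
  have hpow : ∀ n : ℕ, aeval phi ((X * (-P.divX)) ^ n) v = v := by
    intro n
    induction n with
    | zero => simp
    | succ n ih => rw [pow_succ, aeval_mul_apply', key, ih]
  rw [← aeval_X_pow' phi m, ← aeval_mul_apply', ← mul_pow]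
  exact hpow m

end Aux

/-- If `(rho, sigma)` is a shift equivalence between `(V, phi)` and `(V', phi')`, then `rho`
carries the set of algebraic elements of `V` bijectively onto the set of algebraic elements
of `V'`. -/
theorem shift_equivalence_algElem {K V V' : Type*} [Field K]
    [AddCommGroup V] [Module K V] [AddCommGroup V'] [Module K V']
    (phi : Module.End K V) (phi' : Module.End K V')
    (rho : V →ₗ[K] V') (sigma : V' →ₗ[K] V)
    (hrho : ∀ v : V, rho (phi v) = phi' (rho v))
    (hsigma : ∀ v' : V', sigma (phi' v') = phi (sigma v'))
    (m : ℕ) (hsr : ∀ v : V, sigma (rho v) = (phi ^ m) v)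
    (hrs : ∀ v' : V', rho (sigma v') = (phi' ^ m) v') :
    (∀ v : V, IsAlgElem phi v → IsAlgElem phi' (rho v)) ∧
      (∀ v w : V, IsAlgElem phi v → IsAlgElem phi w → rho v = rho w → v = w) ∧
      (∀ v' : V', IsAlgElem phi' v' → ∃ v : V, IsAlgElem phi v ∧ rho v = v') := by
  refine ⟨?_, ?_, ?_⟩
  · rintro v ⟨P, hP0, hPv⟩
    exact ⟨P, hP0, by rw [← equiv_aeval' phi phi' rho hrho, hPv, map_zero]⟩
  · rintro v w ⟨P, hP0, hPv⟩ ⟨Q, hQ0, hQw⟩ hvw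
    set u := v - w with hu
    have hker : (phi ^ m) u = 0 := by
      have : sigma (rho v) = sigma (rho w) := by rw [hvw]
      rw [hsr, hsr] at this
      simp [hu, map_sub, this]
    have hPQ0 : (P * Q).coeff 0 = 1 := by
      rw [mul_coeff_zero, hP0, hQ0, one_mul]
    have hPQu : aeval phi (P * Q) u = 0 := by
      rw [hu, map_sub]
      have h1 : aeval phi (P * Q) v = 0 := by
        rw [mul_comm, aeval_mul_apply', hPv, map_zero]
      have h2 : aeval phi (P * Q) w = 0 := by
        rw [aeval_mul_apply', hQw, map_zero]
      rw [h1, h2, sub_zero]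
    have hfix := fix_pow' phi m (P * Q) u hPQ0 hPQu
    have hzero : u = 0 := by
      rw [pow_aeval_comm', hker, map_zero] at hfix
      exact hfix.symm
    have := sub_eq_zero.mp (by rw [← hu]; exact hzero)
    exact this
  · rintro v' ⟨P, hP0, hPv'⟩
    have hfix := fix_pow' phi' m P v' hP0 hPv'
    set w' := aeval phi' ((-P.divX) ^ m) v' with hw'
    refine ⟨sigma w', ⟨P, hP0, ?_⟩, ?_⟩
    · rw [← equiv_aeval' phi' phi sigma hsigma]
      have : aeval phi' P w' = 0 := by
        rw [hw', ← aeval_mul_apply', mul_comm, aeval_mul_apply', hPv', map_zero]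
      rw [this, map_zero]
    · rw [hrs, hfix]
end

section
/- If (rho, sigma) is a shift equivalence between (V, phi) and (V', phi') and every element of V is eventually algebraic, then every element of V' is eventually algebraic. -/
open Polynomial

lemma equivariant_pow {K V V' : Type*} [Field K]
    [AddCommGroup V] [Module K V] [AddCommGroup V'] [Module K V']
    (phi : Module.End K V) (phi' : Module.End K V')
    (rho : V →ₗ[K] V') (hrho : ∀ v : V, rho (phi v) = phi' (rho v))
    (n : ℕ) (v : V) : rho ((phi ^ n) v) = (phi' ^ n) (rho v) := by
  induction n with
  | zero => simp
  | succ n ih =>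
      rw [pow_succ', pow_succ']
      simp only [Module.End.mul_apply, hrho, ih]

lemma equivariant_aeval {K V V' : Type*} [Field K]
    [AddCommGroup V] [Module K V] [AddCommGroup V'] [Module K V']
    (phi : Module.End K V) (phi' : Module.End K V')
    (rho : V →ₗ[K] V') (hrho : ∀ v : V, rho (phi v) = phi' (rho v))
    (P : K[X]) (v : V) : rho (Polynomial.aeval phi P v) = Polynomial.aeval phi' P (rho v) := by
  induction P using Polynomial.induction_on' with
  | add p q hp hq => simp [map_add, hp, hq]
  | monomial n a =>
      simp only [Polynomial.aeval_monomial, Module.End.mul_apply,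
        Module.algebraMap_end_apply, map_smul]
      rw [equivariant_pow phi phi' rho hrho]

/-- If `(rho, sigma)` is a shift equivalence between `(V, phi)` and `(V', phi')` and every
element of `V` is eventually algebraic, then every element of `V'` is eventually
algebraic. -/
theorem shift_equivalence_eventually_algElem {K V V' : Type*} [Field K]
    [AddCommGroup V] [Module K V] [AddCommGroup V'] [Module K V']
    (phi : Module.End K V) (phi' : Module.End K V')
    (rho : V →ₗ[K] V') (sigma : V' →ₗ[K] V)
    (hrho : ∀ v : V, rho (phi v) = phi' (rho v))
    (hsigma : ∀ v' : V', sigma (phi' v') = phi (sigma v'))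
    (m : ℕ) (hsr : ∀ v : V, sigma (rho v) = (phi ^ m) v)
    (hrs : ∀ v' : V', rho (sigma v') = (phi' ^ m) v')
    (hV : ∀ v : V, ∃ k : ℕ, IsAlgElem phi ((phi ^ k) v)) :
    ∀ v' : V', ∃ k : ℕ, IsAlgElem phi' ((phi' ^ k) v') := by
  intro v'
  obtain ⟨k, P, hP0, hPv⟩ := hV (sigma v')
  refine ⟨k + m, P, hP0, ?_⟩
  have := congrArg rho hPv
  rw [equivariant_aeval phi phi' rho hrho] at this
  rw [equivariant_pow phi phi' rho hrho, hrs v'] at this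
  have h2 : (phi' ^ k) ((phi' ^ m) v') = (phi' ^ (k + m)) v' := by
    rw [← Module.End.mul_apply, ← pow_add]
  rw [h2] at this
  simpa using this
end

section
/- Let V1 -> V2 -> V3 be a sequence of vector spaces with endomorphisms phi1, phi2, phi3 and equivariant linear maps alpha1 : V1 -> V2 and alpha2 : V2 -> V3, exact at V2 (i.e. the image of alpha1 equals the kernel of alpha2). If every element of V1 and every element of V3 is eventually algebraic, then the restricted sequence of algebraic parts AV1 -> AV2 -> AV3 is exact at AV2; that is, for every algebraic element v2 of V2 with alpha2(v2) = 0 there exists an algebraic element v1 of V1 with alpha1(v1) = v2. -/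
open Polynomial

private lemma aeval_equiv {K A B : Type*} [Field K] [AddCommGroup A] [Module K A]
    [AddCommGroup B] [Module K B] (phiA : Module.End K A) (phiB : Module.End K B)
    (f : A →ₗ[K] B) (h : ∀ a, f (phiA a) = phiB (f a)) (R : K[X]) (a : A) :
    f (Polynomial.aeval phiA R a) = Polynomial.aeval phiB R (f a) := by
  have hpow : ∀ n : ℕ, ∀ a : A, f ((phiA ^ n) a) = (phiB ^ n) (f a) := by
    intro n
    induction n with
    | zero => intro a; simp
    | succ n ih =>
      intro a
      rw [pow_succ', pow_succ', Module.End.mul_apply, Module.End.mul_apply, h, ih]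
  induction R using Polynomial.induction_on' with
  | add p q hp hq => simp [map_add, hp, hq]
  | monomial n c =>
    simp only [Polynomial.aeval_monomial, Module.End.mul_apply, Module.algebraMap_end_apply,
      map_smul, hpow]

private lemma aeval_mul_apply {K V : Type*} [Field K] [AddCommGroup V] [Module K V]
    (phi : Module.End K V) (P Q : K[X]) (v : V) :
    Polynomial.aeval phi (P * Q) v = Polynomial.aeval phi P (Polynomial.aeval phi Q v) := by
  rw [map_mul, Module.End.mul_apply]

/-- Given an equivariant sequence `V1 → V2 → V3` exact at `V2`, if every element of `V1` and
of `V3` is eventually algebraic then the sequence of algebraic parts is exact at `AV2`: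
every algebraic element of `ker alpha2` is the image under `alpha1` of an algebraic
element of `V1`. -/
theorem algebraic_parts_exact {K V1 V2 V3 : Type*} [Field K]
    [AddCommGroup V1] [Module K V1] [AddCommGroup V2] [Module K V2]
    [AddCommGroup V3] [Module K V3]
    (phi1 : Module.End K V1) (phi2 : Module.End K V2) (phi3 : Module.End K V3)
    (alpha1 : V1 →ₗ[K] V2) (alpha2 : V2 →ₗ[K] V3)
    (h1 : ∀ v : V1, alpha1 (phi1 v) = phi2 (alpha1 v))
    (h2 : ∀ v : V2, alpha2 (phi2 v) = phi3 (alpha2 v))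
    (hexact : LinearMap.range alpha1 = LinearMap.ker alpha2)
    (hV1 : ∀ v : V1, ∃ k : ℕ, IsAlgElem phi1 ((phi1 ^ k) v))
    (hV3 : ∀ v : V3, ∃ k : ℕ, IsAlgElem phi3 ((phi3 ^ k) v)) :
    ∀ v2 : V2, IsAlgElem phi2 v2 → alpha2 v2 = 0 →
      ∃ v1 : V1, IsAlgElem phi1 v1 ∧ alpha1 v1 = v2 := by
  intro v2 ⟨P, hP0, hPv⟩ hker
  -- lift v2 to w in V1
  obtain ⟨w, hw⟩ : v2 ∈ LinearMap.range alpha1 := by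
    rw [hexact]; exact hker
  -- u := P(phi1) w maps to 0
  set u : V1 := Polynomial.aeval phi1 P w with hu
  have hau : alpha1 u = 0 := by
    rw [hu, aeval_equiv phi1 phi2 alpha1 h1, hw, hPv]
  obtain ⟨k, Q, hQ0, hQu⟩ := hV1 u
  -- phi1^k w is algebraic via N := Q * P
  set N : K[X] := Q * P with hN
  have hN0 : N.coeff 0 = 1 := by
    rw [hN, Polynomial.mul_coeff_zero, hQ0, hP0, one_mul]
  have hNw : Polynomial.aeval phi1 N ((phi1 ^ k) w) = 0 := by
    have hXk : ∀ x : V1, (phi1 ^ k) x = Polynomial.aeval phi1 ((X : K[X]) ^ k) x := by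
      intro x; rw [map_pow, Polynomial.aeval_X]
    rw [hXk, ← aeval_mul_apply, hN, mul_assoc, mul_comm P (X ^ k : K[X]), ← mul_assoc,
      aeval_mul_apply, aeval_mul_apply, ← hu, ← hXk, hQu]
  -- write P = X * P.divX + C 1
  set S : K[X] := -P.divX with hS
  have hstep : Polynomial.aeval phi2 (X * S) v2 = v2 := by
    have hPdec : P = X * P.divX + C (P.coeff 0) := (Polynomial.X_mul_divX_add P).symm
    have h0 : Polynomial.aeval phi2 (X * P.divX) v2 + v2 = 0 := by
      have := hPv
      conv_lhs at this => rw [hPdec]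
      simpa [hP0] using this
    have : Polynomial.aeval phi2 (X * P.divX) v2 = -v2 := eq_neg_of_add_eq_zero_left h0
    rw [hS, mul_neg, map_neg, LinearMap.neg_apply, this, neg_neg]
  -- iterate: v2 = aeval ((X*S)^k) v2
  have hiter : ∀ m : ℕ, Polynomial.aeval phi2 ((X * S) ^ m) v2 = v2 := by
    intro m
    induction m with
    | zero => simp
    | succ m ih => rw [pow_succ, aeval_mul_apply, hstep, ih]
  -- define v1
  refine ⟨Polynomial.aeval phi1 (S ^ k) ((phi1 ^ k) w), ?_, ?_⟩
  · refine ⟨N, hN0, ?_⟩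
    rw [← aeval_mul_apply, mul_comm, aeval_mul_apply, hNw, map_zero]
  · rw [aeval_equiv phi1 phi2 alpha1 h1]
    have hpw : alpha1 ((phi1 ^ k) w) = (phi2 ^ k) v2 := by
      have := aeval_equiv phi1 phi2 alpha1 h1 ((X : K[X]) ^ k) w
      rw [map_pow, Polynomial.aeval_X, map_pow, Polynomial.aeval_X, hw] at this
      exact this
    rw [hpw]
    have : Polynomial.aeval phi2 (S ^ k) ((phi2 ^ k) v2)
        = Polynomial.aeval phi2 ((X * S) ^ k) v2 := by
      rw [mul_pow, mul_comm, aeval_mul_apply]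
      simp
    rw [this, hiter]
end

section
/- Let V1 -> V2 -> V3 be a sequence of vector spaces with endomorphisms phi1, phi2, phi3 and equivariant linear maps alpha1 : V1 -> V2 and alpha2 : V2 -> V3, exact at V2 (i.e. the image of alpha1 equals the kernel of alpha2). If every element of V1 and every element of V3 is eventually algebraic, then every element of V2 is eventually algebraic. -/
open Polynomial

lemma equiv_aeval {K V W : Type*} [Field K] [AddCommGroup V] [Module K V]
    [AddCommGroup W] [Module K W]
    (phi : Module.End K V) (psi : Module.End K W) (alpha : V →ₗ[K] W)
    (h : ∀ v : V, alpha (phi v) = psi (alpha v)) (P : K[X]) (v : V) :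
    alpha (Polynomial.aeval phi P v) = Polynomial.aeval psi P (alpha v) := by
  have hpow : ∀ (n : ℕ) (v : V), alpha ((phi ^ n) v) = (psi ^ n) (alpha v) := by
    intro n
    induction n with
    | zero => intro v; simp
    | succ n ih =>
      intro v
      rw [pow_succ, pow_succ]
      simp only [Module.End.mul_apply]
      rw [ih, h]
  induction P using Polynomial.induction_on' with
  | add p q hp hq => simp [hp, hq]
  | monomial n c =>
    simp [Polynomial.aeval_monomial, Module.End.mul_apply,
      Module.algebraMap_end_apply, hpow]

/-- Given an equivariant sequence `V1 → V2 → V3` exact at `V2`, if every element of `V1` and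
of `V3` is eventually algebraic, then every element of `V2` is eventually algebraic. -/
theorem middle_eventually_algebraic {K V1 V2 V3 : Type*} [Field K]
    [AddCommGroup V1] [Module K V1] [AddCommGroup V2] [Module K V2]
    [AddCommGroup V3] [Module K V3]
    (phi1 : Module.End K V1) (phi2 : Module.End K V2) (phi3 : Module.End K V3)
    (alpha1 : V1 →ₗ[K] V2) (alpha2 : V2 →ₗ[K] V3)
    (h1 : ∀ v : V1, alpha1 (phi1 v) = phi2 (alpha1 v))
    (h2 : ∀ v : V2, alpha2 (phi2 v) = phi3 (alpha2 v))
    (hexact : LinearMap.range alpha1 = LinearMap.ker alpha2)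
    (hV1 : ∀ v : V1, ∃ k : ℕ, IsAlgElem phi1 ((phi1 ^ k) v))
    (hV3 : ∀ v : V3, ∃ k : ℕ, IsAlgElem phi3 ((phi3 ^ k) v)) :
    ∀ v2 : V2, ∃ k : ℕ, IsAlgElem phi2 ((phi2 ^ k) v2) := by
  have comp : ∀ (A B : K[X]) (v : V2),
      Polynomial.aeval phi2 A (Polynomial.aeval phi2 B v)
        = Polynomial.aeval phi2 (A * B) v := by
    intro A B v
    rw [map_mul]; rfl
  have hX : ∀ (n : ℕ) (v : V2), (phi2 ^ n) v = Polynomial.aeval phi2 ((X : K[X]) ^ n) v := by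
    intro n v; rw [map_pow, Polynomial.aeval_X]
  intro v2
  obtain ⟨k, P, hP0, hP⟩ := hV3 (alpha2 v2)
  set w : V2 := Polynomial.aeval phi2 P ((phi2 ^ k) v2) with hw
  have hker : alpha2 w = 0 := by
    have hpow2 : alpha2 ((phi2 ^ k) v2) = (phi3 ^ k) (alpha2 v2) := by
      have := equiv_aeval phi2 phi3 alpha2 h2 (X ^ k) v2
      simpa using this
    rw [hw, equiv_aeval phi2 phi3 alpha2 h2, hpow2, hP]
  have : w ∈ LinearMap.range alpha1 := by rw [hexact]; exact hker
  obtain ⟨u, hu⟩ := this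
  obtain ⟨m, Q, hQ0, hQ⟩ := hV1 u
  refine ⟨k + m, Q * P, by rw [Polynomial.mul_coeff_zero, hQ0, hP0, one_mul], ?_⟩
  have key : Polynomial.aeval phi2 (Q * X ^ m) w = 0 := by
    rw [← hu, ← equiv_aeval phi1 phi2 alpha1 h1]
    have : Polynomial.aeval phi1 (Q * X ^ m) u
        = Polynomial.aeval phi1 Q ((phi1 ^ m) u) := by
      rw [map_mul]
      simp [Module.End.mul_apply]
    rw [this, hQ, map_zero]
  calc Polynomial.aeval phi2 (Q * P) ((phi2 ^ (k + m)) v2)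
      = Polynomial.aeval phi2 (Q * P * X ^ (k + m)) v2 := by rw [hX, comp]
    _ = Polynomial.aeval phi2 ((Q * X ^ m) * (P * X ^ k)) v2 := by ring_nf
    _ = Polynomial.aeval phi2 (Q * X ^ m) w := by
        rw [hw, hX k, comp, comp, ← mul_assoc]
    _ = 0 := key
end

section
/- Let M be a metric space, f : M -> M continuous, and L ⊆ N compact subsets of M with f(L) ∩ closure(N \ L) = ∅. Then the local stable manifold W^s_loc = {x in N : f^n(x) in N \ L for all n >= 0} satisfies W^s_loc = {x in M : f^n(x) in closure(N \ L) for all n >= 0}; consequently W^s_loc is compact, positively invariant (f(W^s_loc) ⊆ W^s_loc), and disjoint from L. -/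
/-- Let `f : M → M` be continuous and `L ⊆ N` compact subsets with
`f(L) ∩ closure(N \ L) = ∅`. Then the local stable manifold
`W = {x ∈ N : f^n(x) ∈ N \ L for all n ≥ 0}` equals
`{x : f^n(x) ∈ closure(N \ L) for all n ≥ 0}`; consequently it is compact, positively
invariant and disjoint from `L`. -/
theorem locStable_properties {M : Type*} [MetricSpace M] (f : M → M) (hf : Continuous f)
    (N L : Set M) (hLN : L ⊆ N) (hN : IsCompact N) (hL : IsCompact L)
    (hfL : f '' L ∩ closure (N \ L) = ∅) :
    {x : M | x ∈ N ∧ ∀ n : ℕ, f^[n] x ∈ N \ L} =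
        {x : M | ∀ n : ℕ, f^[n] x ∈ closure (N \ L)} ∧
      IsCompact {x : M | x ∈ N ∧ ∀ n : ℕ, f^[n] x ∈ N \ L} ∧
      f '' {x : M | x ∈ N ∧ ∀ n : ℕ, f^[n] x ∈ N \ L} ⊆
        {x : M | x ∈ N ∧ ∀ n : ℕ, f^[n] x ∈ N \ L} ∧
      {x : M | x ∈ N ∧ ∀ n : ℕ, f^[n] x ∈ N \ L} ∩ L = ∅ := by
  have hsub : closure (N \ L) ⊆ N := closure_minimal Set.diff_subset hN.isClosed
  have key : {x : M | x ∈ N ∧ ∀ n : ℕ, f^[n] x ∈ N \ L} =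
      {x : M | ∀ n : ℕ, f^[n] x ∈ closure (N \ L)} := by
    ext x
    constructor
    · rintro ⟨-, h⟩ n
      exact subset_closure (h n)
    · intro h
      have hmem : ∀ n, f^[n] x ∈ N \ L := by
        intro n
        refine ⟨hsub (h n), fun hxL => ?_⟩
        have hc : f (f^[n] x) ∈ f '' L ∩ closure (N \ L) := by
          refine ⟨Set.mem_image_of_mem f hxL, ?_⟩
          have := h (n + 1)
          rwa [Function.iterate_succ_apply'] at this
        simp [hfL] at hc
      exact ⟨by simpa using (hmem 0).1, hmem⟩
  have hrepr : {x : M | ∀ n : ℕ, f^[n] x ∈ closure (N \ L)} =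
      ⋂ n : ℕ, f^[n] ⁻¹' closure (N \ L) := by
    ext x; simp
  refine ⟨key, ?_, ?_, ?_⟩
  · rw [key]
    refine hN.of_isClosed_subset ?_ ?_
    · rw [hrepr]
      exact isClosed_iInter fun n => isClosed_closure.preimage (hf.iterate n)
    · intro x hx
      have := hx 0
      simp only [Function.iterate_zero_apply] at this
      exact hsub this
  · rw [key]
    rintro _ ⟨x, hx, rfl⟩ n
    rw [← Function.iterate_succ_apply]
    exact hx (n + 1)
  · rw [Set.eq_empty_iff_forall_notMem]
    rintro x ⟨⟨-, h⟩, hxL⟩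
    exact (h 0).2 (by simpa using hxL)
end

section
/- Let M be a metric space, f : M -> M continuous, and L ⊆ N compact subsets of M with f(L) ∩ closure(N \ L) = ∅. If D is a compact subset of N disjoint from the local stable manifold W^s_loc = {x in N : f^n(x) in N \ L for all n >= 0}, then there exists an integer k >= 0 such that for every x in D there is some j <= k with f^j(x) not in closure(N \ L). -/
/-- Let `f : M → M` be continuous and `L ⊆ N` compact subsets with
`f(L) ∩ closure(N \ L) = ∅`. If `D ⊆ N` is compact and disjoint from the local stable
manifold `{x ∈ N : f^n(x) ∈ N \ L for all n ≥ 0}`, then there is a uniform `k ≥ 0` such that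
every point of `D` leaves `closure(N \ L)` within `k` iterates. -/
theorem uniform_exit_time {M : Type*} [MetricSpace M] (f : M → M) (hf : Continuous f)
    (N L : Set M) (hLN : L ⊆ N) (hN : IsCompact N) (hL : IsCompact L)
    (hfL : f '' L ∩ closure (N \ L) = ∅)
    (D : Set M) (hD : IsCompact D) (hDN : D ⊆ N)
    (hdisj : D ∩ {x : M | x ∈ N ∧ ∀ n : ℕ, f^[n] x ∈ N \ L} = ∅) :
    ∃ k : ℕ, ∀ x ∈ D, ∃ j ≤ k, f^[j] x ∉ closure (N \ L) := by
  set C := closure (N \ L) with hC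
  have hCN : C ⊆ N := closure_minimal Set.diff_subset hN.isClosed
  have hU : ∀ j : ℕ, IsOpen (f^[j] ⁻¹' Cᶜ) := fun j =>
    isClosed_closure.isOpen_compl.preimage (hf.iterate j)
  have hcover : D ⊆ ⋃ j : ℕ, f^[j] ⁻¹' Cᶜ := by
    intro x hx
    have hxN : x ∈ N := hDN hx
    have hnot : ¬ ∀ n : ℕ, f^[n] x ∈ N \ L := by
      intro h
      have hmem : x ∈ D ∩ {x : M | x ∈ N ∧ ∀ n : ℕ, f^[n] x ∈ N \ L} := ⟨hx, hxN, h⟩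
      rw [hdisj] at hmem
      exact hmem
    push_neg at hnot
    obtain ⟨n, hn⟩ := hnot
    by_cases hnN : f^[n] x ∈ N
    · have hnL : f^[n] x ∈ L := by
        by_contra h; exact hn ⟨hnN, h⟩
      have himg : f^[n+1] x ∈ f '' L := by
        rw [Function.iterate_succ_apply']
        exact ⟨_, hnL, rfl⟩
      have hnotC : f^[n+1] x ∉ C := by
        intro hC'
        have : f^[n+1] x ∈ f '' L ∩ closure (N \ L) := ⟨himg, hC'⟩
        rw [hfL] at this
        exact this
      exact Set.mem_iUnion.2 ⟨n+1, hnotC⟩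
    · exact Set.mem_iUnion.2 ⟨n, fun h => hnN (hCN h)⟩
  obtain ⟨t, ht⟩ := hD.elim_finite_subcover _ hU hcover
  refine ⟨t.sup id, fun x hx => ?_⟩
  obtain ⟨j, hj, hxj⟩ := Set.mem_iUnion₂.1 (ht hx)
  exact ⟨j, Finset.le_sup (f := id) hj, hxj⟩
end

section
/- Let M be a metric space, f : M -> M continuous, and N a compact subset of M. Suppose x in N has the property that for every integer k >= 0 there exists y in M with f^j(y) in N for all 0 <= j <= k and f^k(y) = x. Then x admits a full negative semiorbit in N: there is a sequence (x_n)_{n >= 0} with x_0 = x, f(x_{n+1}) = x_n, and x_n in N for all n. -/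
/-- Let `f : M → M` be continuous and `N ⊆ M` compact. If `x ∈ N` is such that for every
`k ≥ 0` there exists `y` whose first `k` iterates stay in `N` and with `f^k(y) = x`, then
`x` admits a full negative semiorbit in `N`: a sequence `(x_n)` with `x_0 = x`,
`f(x_{n+1}) = x_n` and `x_n ∈ N` for all `n`. -/
theorem negative_semiorbit_exists {M : Type*} [MetricSpace M] (f : M → M)
    (hf : Continuous f) (N : Set M) (hN : IsCompact N) (x : M) (hx : x ∈ N)
    (h : ∀ k : ℕ, ∃ y : M, (∀ j ≤ k, f^[j] y ∈ N) ∧ f^[k] y = x) :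
    ∃ u : ℕ → M, u 0 = x ∧ (∀ n : ℕ, f (u (n + 1)) = u n) ∧ (∀ n : ℕ, u n ∈ N) := by
  haveI : CompactSpace N := isCompact_iff_compactSpace.mp hN
  let C : ℕ → Set (ℕ → N) :=
    fun k => {u | (u 0 : M) = x ∧ ∀ n < k, f (u (n + 1) : M) = (u n : M)}
  have hclosed : ∀ k, IsClosed (C k) := by
    intro k
    have hcont : ∀ n : ℕ, Continuous fun u : ℕ → N => (u n : M) := fun n =>
      continuous_subtype_val.comp (continuous_apply n)
    have h1 : IsClosed {u : ℕ → N | (u 0 : M) = x} :=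
      isClosed_eq (hcont 0) continuous_const
    have h2 : ∀ n : ℕ, IsClosed {u : ℕ → N | f (u (n + 1) : M) = (u n : M)} := fun n =>
      isClosed_eq (hf.comp (hcont (n + 1))) (hcont n)
    have heq : C k = {u : ℕ → N | (u 0 : M) = x} ∩
        ⋂ n ∈ Set.Iio k, {u : ℕ → N | f (u (n + 1) : M) = (u n : M)} := by
      ext u
      simp [C, Set.mem_iInter]
    rw [heq]
    exact h1.inter (isClosed_biInter fun n _ => h2 n)
  have hanti : ∀ k, C (k + 1) ⊆ C k := fun k u hu =>
    ⟨hu.1, fun n hn => hu.2 n (hn.trans (Nat.lt_succ_self k))⟩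
  have hne : ∀ k, (C k).Nonempty := by
    intro k
    obtain ⟨y, hy, hyk⟩ := h k
    refine ⟨fun n => if hn : n ≤ k then ⟨f^[k - n] y, hy _ (Nat.sub_le k n)⟩ else ⟨x, hx⟩,
      ?_, ?_⟩
    · simp only [dif_pos (Nat.zero_le k), Nat.sub_zero]
      exact hyk
    · intro n hn
      have hn1 : n + 1 ≤ k := hn
      have hnk : n ≤ k := hn.le
      simp only [dif_pos hn1, dif_pos hnk]
      rw [← Function.iterate_succ_apply' f]
      congr 1
      omega
  obtain ⟨u, hu⟩ := IsCompact.nonempty_iInter_of_sequence_nonempty_isCompact_isClosed C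
    hanti hne ((hclosed 0).isCompact) hclosed
  simp only [Set.mem_iInter] at hu
  exact ⟨fun n => (u n : M), (hu 0).1,
    fun n => (hu (n + 1)).2 n (Nat.lt_succ_self n), fun n => (u n).2⟩
end

section
/- Let M be a metric space, f : M -> M continuous, and N_2 ⊆ N_1 ⊆ N_0 compact subsets of M with f(N_1) ∩ closure(N_0 \ N_1) = ∅ and f(N_2) ∩ closure(N_0 \ N_2) = ∅. Let S = Inv(closure(N_0 \ N_2)) be the set of points of closure(N_0 \ N_2) through which there passes a full orbit contained in closure(N_0 \ N_2), let W^u_loc(N_0) be the set of points of N_0 admitting a negative semiorbit contained in N_0, and set F = W^u_loc(N_0) ∩ N_1. Then: (a) every x in F ∩ S satisfies f^n(x) in N_1 \ N_2 for all n >= 0 (i.e. F ∩ S is contained in the local stable manifold of the pair (N_1, N_2)); and (b) conversely, if x in F satisfies f^n(x) in N_1 \ N_2 for all n >= 0, then x belongs to S. -/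
/-- `Inv f T`: the set of points of `T` through which there passes a full orbit contained in
`T`. -/
def fullOrbitInv {M : Type*} (f : M → M) (T : Set M) : Set M :=
  {x : M | ∃ u : ℤ → M, u 0 = x ∧ (∀ n : ℤ, u (n + 1) = f (u n)) ∧ ∀ n : ℤ, u n ∈ T}

/-- The local unstable manifold of `N`: points of `N` admitting a negative semiorbit
contained in `N`. -/
def locUnstable {M : Type*} (f : M → M) (N : Set M) : Set M :=
  {x : M | x ∈ N ∧ ∃ u : ℕ → M, u 0 = x ∧ (∀ n : ℕ, f (u (n + 1)) = u n) ∧ ∀ n : ℕ, u n ∈ N}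

/-- Glue a forward orbit of `x` with a negative semiorbit `u` into a bi-infinite sequence. -/
def glueOrbit {M : Type*} (f : M → M) (x : M) (u : ℕ → M) : ℤ → M
  | Int.ofNat m => f^[m] x
  | Int.negSucc m => u (m + 1)

/-- Let `N2 ⊆ N1 ⊆ N0` be compacts with `f(N1) ∩ closure(N0 \ N1) = ∅` and
`f(N2) ∩ closure(N0 \ N2) = ∅`, let `S = Inv(closure(N0 \ N2))` and
`F = W^u_loc(N0) ∩ N1`. Then (a) every `x ∈ F ∩ S` satisfies `f^n(x) ∈ N1 \ N2` for all
`n ≥ 0`, and (b) conversely any `x ∈ F` with `f^n(x) ∈ N1 \ N2` for all `n ≥ 0` belongs to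
`S`. -/
theorem stable_manifold_intersection {M : Type*} [MetricSpace M] (f : M → M)
    (hf : Continuous f) (N0 N1 N2 : Set M) (h21 : N2 ⊆ N1) (h10 : N1 ⊆ N0)
    (hN0 : IsCompact N0) (hN1 : IsCompact N1) (hN2 : IsCompact N2)
    (hf1 : f '' N1 ∩ closure (N0 \ N1) = ∅)
    (hf2 : f '' N2 ∩ closure (N0 \ N2) = ∅) :
    (∀ x ∈ (locUnstable f N0 ∩ N1) ∩ fullOrbitInv f (closure (N0 \ N2)),
        ∀ n : ℕ, f^[n] x ∈ N1 \ N2) ∧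
      (∀ x ∈ locUnstable f N0 ∩ N1, (∀ n : ℕ, f^[n] x ∈ N1 \ N2) →
        x ∈ fullOrbitInv f (closure (N0 \ N2))) := by
  have hsub : closure (N0 \ N2) ⊆ N0 := by
    have := closure_mono (Set.diff_subset : N0 \ N2 ⊆ N0)
    simpa [hN0.isClosed.closure_eq] using this
  constructor
  · rintro x ⟨⟨_, hxN1⟩, u, hu0, hrec, hmem⟩ n
    have key : ∀ k : ℕ, u (k : ℤ) = f^[k] x := by
      intro k
      induction k with
      | zero => simpa using hu0
      | succ k ih =>
        have h := hrec (k : ℤ)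
        rw [show ((k : ℤ) + 1) = ((k + 1 : ℕ) : ℤ) by push_cast; ring] at h
        rw [h, ih, Function.iterate_succ_apply']
    have hN0mem : ∀ k : ℕ, f^[k] x ∈ N0 := fun k => hsub (key k ▸ hmem (k : ℤ))
    have hnotN2 : ∀ k : ℕ, f^[k] x ∉ N2 := by
      intro k hk
      have h1 : f^[k + 1] x ∈ f '' N2 := ⟨_, hk, (Function.iterate_succ_apply' f k x).symm⟩
      have h2 : f^[k + 1] x ∈ closure (N0 \ N2) := key (k + 1) ▸ hmem ((k + 1 : ℕ) : ℤ)
      exact Set.eq_empty_iff_forall_notMem.mp hf2 _ ⟨h1, h2⟩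
    have hN1mem : ∀ k : ℕ, f^[k] x ∈ N1 := by
      intro k
      induction k with
      | zero => simpa using hxN1
      | succ k ih =>
        by_contra h
        have h1 : f^[k + 1] x ∈ f '' N1 := ⟨_, ih, (Function.iterate_succ_apply' f k x).symm⟩
        have h2 : f^[k + 1] x ∈ closure (N0 \ N1) := subset_closure ⟨hN0mem (k + 1), h⟩
        exact Set.eq_empty_iff_forall_notMem.mp hf1 _ ⟨h1, h2⟩
    exact ⟨hN1mem n, hnotN2 n⟩
  · rintro x ⟨⟨_, u, hu0, hrec, hmem⟩, _⟩ hfor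
    have hxnot : x ∉ N2 := by simpa using (hfor 0).2
    have hunot : ∀ k : ℕ, u k ∉ N2 := by
      intro k
      induction k with
      | zero => rw [hu0]; exact hxnot
      | succ k ih =>
        intro h
        apply ih
        by_contra hk
        have h1 : u k ∈ f '' N2 := ⟨_, h, hrec k⟩
        have h2 : u k ∈ closure (N0 \ N2) := subset_closure ⟨hmem k, hk⟩
        exact Set.eq_empty_iff_forall_notMem.mp hf2 _ ⟨h1, h2⟩
    refine ⟨glueOrbit f x u, rfl, ?_, ?_⟩
    · intro n
      cases n with
      | ofNat m =>
        rw [show (Int.ofNat m + 1) = Int.ofNat (m + 1) by rfl]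
        show f^[m + 1] x = f (f^[m] x)
        exact Function.iterate_succ_apply' f m x
      | negSucc m =>
        cases m with
        | zero =>
          rw [show (Int.negSucc 0 + 1) = Int.ofNat 0 by rfl]
          show x = f (u 1)
          rw [hrec 0, hu0]
        | succ m =>
          rw [show (Int.negSucc (m + 1) + 1) = Int.negSucc m by rfl]
          show u (m + 1) = f (u (m + 2))
          exact (hrec (m + 1)).symm
    · intro n
      cases n with
      | ofNat m => exact subset_closure ⟨h10 (hfor m).1, (hfor m).2⟩
      | negSucc m => exact subset_closure ⟨hmem (m + 1), hunot (m + 1)⟩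
end

section
/- Let M be a metric space, f : M -> M continuous, and L ⊆ N compact subsets of M with f(L) ∩ closure(N \ L) = ∅ and such that f(y) lies in the interior of N for every y in N \ L. Let W^s_loc = {x in N : f^n(x) in N \ L for all n >= 0}. Let Z be a compact subset of M, Z_0 a closed subset of Z, and suppose there exist an integer n >= 0 and a neighbourhood U of Z_0 in Z such that f^n(Z_0) ⊆ W^s_loc and f^n(U \ Z_0) ⊆ N \ W^s_loc. Then for every integer n' >= n there exists a neighbourhood U' of Z_0 in Z with U' ⊆ U such that f^{n'}(Z_0) ⊆ W^s_loc and f^{n'}(U' \ Z_0) ⊆ N \ W^s_loc. -/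
/-- If the admissibility conditions hold for some `n` and some neighbourhood `U` of `Z0` in
`Z`, then for any `n' ≥ n` they hold for `n'` and some smaller neighbourhood `U' ⊆ U`. -/
theorem admissibility_persists {M : Type*} [MetricSpace M] (f : M → M) (hf : Continuous f)
    (N L : Set M) (hLN : L ⊆ N) (hN : IsCompact N) (hL : IsCompact L)
    (hfL : f '' L ∩ closure (N \ L) = ∅)
    (hint : ∀ y ∈ N \ L, f y ∈ interior N)
    (Wsloc : Set M) (hW : Wsloc = {x : M | x ∈ N ∧ ∀ n : ℕ, f^[n] x ∈ N \ L})
    (Z Z0 : Set M) (hZ : IsCompact Z) (hZ0Z : Z0 ⊆ Z) (hZ0 : IsClosed Z0)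
    (n : ℕ) (U : Set M) (hUZ : U ⊆ Z)
    (hUnbhd : ∃ V : Set M, IsOpen V ∧ Z0 ⊆ V ∧ V ∩ Z ⊆ U)
    (hA1 : f^[n] '' Z0 ⊆ Wsloc)
    (hA2 : f^[n] '' (U \ Z0) ⊆ N \ Wsloc) :
    ∀ n' : ℕ, n ≤ n' → ∃ U' : Set M, U' ⊆ Z ∧
      (∃ V : Set M, IsOpen V ∧ Z0 ⊆ V ∧ V ∩ Z ⊆ U') ∧ U' ⊆ U ∧
      f^[n'] '' Z0 ⊆ Wsloc ∧ f^[n'] '' (U' \ Z0) ⊆ N \ Wsloc := by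

  subst hW
  -- forward invariance of Wsloc
  have hstep : ∀ y, y ∈ {x : M | x ∈ N ∧ ∀ n : ℕ, f^[n] x ∈ N \ L} →
      f y ∈ {x : M | x ∈ N ∧ ∀ n : ℕ, f^[n] x ∈ N \ L} := by
    intro y ⟨hyN, hy⟩
    refine ⟨(hy 1).1, fun k => ?_⟩
    have := hy (k + 1)
    rwa [Function.iterate_succ_apply] at this
  have hstep2 : ∀ y, y ∈ N \ L → y ∉ {x : M | x ∈ N ∧ ∀ n : ℕ, f^[n] x ∈ N \ L} →
      f y ∈ N \ {x : M | x ∈ N ∧ ∀ n : ℕ, f^[n] x ∈ N \ L} := by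
    intro y hyNL hy
    refine ⟨interior_subset (hint y hyNL), fun hfy => ?_⟩
    exact hy ⟨hyNL.1, fun k => by
      cases k with
      | zero => exact hyNL
      | succ k => rw [Function.iterate_succ_apply]; exact hfy.2 k⟩
  intro n' hn'
  induction n', hn' using Nat.le_induction with
  | base => exact ⟨U, hUZ, hUnbhd, subset_rfl, hA1, hA2⟩
  | succ m hm ih =>
    obtain ⟨U', hU'Z, ⟨V, hVopen, hZ0V, hVZ⟩, hU'U, h1, h2⟩ := ih
    have hV'open : IsOpen (f^[m] ⁻¹' Lᶜ) :=
      (hL.isClosed.isOpen_compl).preimage (hf.iterate m)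
    refine ⟨U' ∩ f^[m] ⁻¹' Lᶜ, (Set.inter_subset_left).trans hU'Z,
      ⟨V ∩ f^[m] ⁻¹' Lᶜ, hVopen.inter hV'open, ?_, ?_⟩,
      (Set.inter_subset_left).trans hU'U, ?_, ?_⟩
    · intro x hx
      exact ⟨hZ0V hx, ((h1 ⟨x, hx, rfl⟩).2 0).2⟩
    · intro x ⟨⟨hxV, hxV'⟩, hxZ⟩
      exact ⟨hVZ ⟨hxV, hxZ⟩, hxV'⟩
    · rintro _ ⟨x, hx, rfl⟩
      rw [Function.iterate_succ_apply']
      exact hstep _ (h1 ⟨x, hx, rfl⟩)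
    · rintro _ ⟨x, ⟨⟨hxU', hxV'⟩, hxZ0⟩, rfl⟩
      rw [Function.iterate_succ_apply']
      have hy := h2 ⟨x, ⟨hxU', hxZ0⟩, rfl⟩
      exact hstep2 _ ⟨hy.1, hxV'⟩ hy.2
end
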